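/- arXiv:1611.07269 — 9 statements merged into one kernel-verified Lean document; each statement's English description precedes it below -/
import Mathlib

section
/- For a finite abelian group G of order n and positive integer h, there exists a subset A of G with |A| = v(n,h), where v(n,h) = max over divisors d of n of (⌊(d-2)/h⌋+1)·(n/d), such that the h-fold sumset hA ≠ G. -/
/-- The `h`-fold sumset of `A`: all sums of `h` not-necessarily-distinct elements of `A`. -/
def foldSum {G : Type*} [AddCommMonoid G] (h : ℕ) (A : Set G) : Set G :=
  {x | ∃ f : Fin h → G, (∀ i, f i ∈ A) ∧ ∑ i, f i = x}

/-- `[0,s]A = ⋃_{h=0}^{s} hA`. -/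
def intervalSum {G : Type*} [AddCommMonoid G] (s : ℕ) (A : Set G) : Set G :=
  ⋃ h ∈ Finset.range (s + 1), foldSum h A

/-- `v(n,h) = max{ (⌊(d-2)/h⌋+1)·(n/d) : d ∣ n }`. -/
def vmax (n h : ℕ) : ℕ :=
  n.divisors.sup fun d => ((((d : ℤ) - 2) / h + 1) * ((n : ℤ) / d)).toNat

universe u

section Aux

lemma foldSum_mono {G : Type*} [AddCommMonoid G] {h : ℕ} {A B : Set G} (hAB : A ⊆ B) :
    foldSum h A ⊆ foldSum h B := by
  rintro x ⟨f, hf, rfl⟩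
  exact ⟨f, fun i => hAB (hf i), rfl⟩

lemma foldSum_empty {G : Type*} [AddCommMonoid G] {h : ℕ} (hh : 0 < h) :
    foldSum h (∅ : Set G) = ∅ := by
  ext x
  simp only [foldSum, Set.mem_setOf_eq, Set.mem_empty_iff_false, iff_false]
  rintro ⟨f, hf, -⟩
  exact hf ⟨0, hh⟩

lemma foldSum_image {M N : Type*} [AddCommMonoid M] [AddCommMonoid N] (ρ : M →+ N) (h : ℕ)
    (C : Set M) : foldSum h (ρ '' C) = ρ '' foldSum h C := by
  ext x
  constructor
  · rintro ⟨f, hf, rfl⟩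
    choose g hg hg2 using hf
    exact ⟨∑ i, g i, ⟨g, hg, rfl⟩, by rw [map_sum]; exact Finset.sum_congr rfl fun i _ => hg2 i⟩
  · rintro ⟨y, ⟨f, hf, rfl⟩, rfl⟩
    exact ⟨fun i => ρ (f i), fun i => ⟨f i, hf i, rfl⟩, (map_sum ρ f Finset.univ).symm⟩

lemma foldSum_preimage {G Q : Type*} [AddCommGroup G] [AddCommGroup Q] (φ : G →+ Q)
    (hφ : Function.Surjective φ) {h : ℕ} (hh : 0 < h) (S : Set Q) :
    foldSum h (φ ⁻¹' S) = φ ⁻¹' foldSum h S := by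
  ext x
  constructor
  · rintro ⟨f, hf, rfl⟩
    exact ⟨fun i => φ (f i), hf, (map_sum φ f Finset.univ).symm⟩
  · rintro ⟨f, hf, hsum⟩
    set g : Fin h → G := fun i => Function.surjInv hφ (f i) with hg
    set i0 : Fin h := ⟨0, hh⟩
    refine ⟨Function.update g i0 (g i0 + (x - ∑ i, g i)), fun i => ?_, ?_⟩
    · rcases eq_or_ne i i0 with rfl | hne
      · simp only [Function.update_self, Set.mem_preimage, map_add, map_sub, map_sum]
        have h1 : ∀ j, φ (g j) = f j := fun j => Function.surjInv_eq hφ (f j)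
        simp only [h1, hsum]
        simpa using hf i0
      · simp only [Function.update_of_ne hne, Set.mem_preimage, hg]
        rw [Function.surjInv_eq hφ]
        exact hf i
    · rw [Finset.sum_update_of_mem (Finset.mem_univ i0), Finset.sdiff_singleton_eq_erase]
      have : ∑ i, g i = g i0 + ∑ i ∈ Finset.univ.erase i0, g i :=
        (Finset.add_sum_erase _ _ (Finset.mem_univ i0)).symm
      rw [this]
      abel

end Aux

lemma ncard_sprod {α β : Type*} (s : Set α) (t : Set β) : (s ×ˢ t).ncard = s.ncard * t.ncard := by
  rw [← Nat.card_coe_set_eq, ← Nat.card_coe_set_eq, ← Nat.card_coe_set_eq,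
    ← Nat.card_prod]
  exact Nat.card_congr (Equiv.Set.prod s t)

lemma ncard_preimage {G Q : Type*} [AddCommGroup G] [AddCommGroup Q] (φ : G →+ Q)
    (hφ : Function.Surjective φ) (S : Set Q) :
    (φ ⁻¹' S).ncard = S.ncard * Nat.card φ.ker := by
  classical
  set ψ : Q → G := Function.surjInv hφ with hψ
  have hψφ : ∀ v, φ (ψ v) = v := fun v => Function.surjInv_eq hφ v
  set e : Q × φ.ker → G := fun p => ψ p.1 + ↑p.2 with he
  have hφe : ∀ p, φ (e p) = p.1 := by
    rintro ⟨v, z, hz⟩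
    simp only [e, map_add, hψφ]
    simpa [AddMonoidHom.mem_ker.mp hz] using (AddMonoidHom.mem_ker _).mp hz
  have he_inj : Function.Injective e := by
    rintro ⟨v1, z1⟩ ⟨v2, z2⟩ hevz
    have h1 : v1 = v2 := by
      have e1 := hφe ⟨v1, z1⟩
      have e2 := hφe ⟨v2, z2⟩
      simp only at e1 e2
      rw [← e1, ← e2, hevz]
    subst h1
    have : (z1 : G) = z2 := by
      have := hevz
      simp only [e] at this
      exact add_left_cancel this
    exact Prod.ext rfl (Subtype.ext this)
  have himg : φ ⁻¹' S = e '' (S ×ˢ Set.univ) := by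
    ext x
    constructor
    · intro hx
      refine ⟨⟨φ x, ⟨x - ψ (φ x), ?_⟩⟩, ⟨hx, trivial⟩, ?_⟩
      · rw [AddMonoidHom.mem_ker, map_sub, hψφ, sub_self]
      · simp [e]
    · rintro ⟨p, ⟨hp, -⟩, rfl⟩
      simpa [Set.mem_preimage, hφe p] using hp
  rw [himg, Set.ncard_image_of_injective _ he_inj, ncard_sprod, Set.ncard_univ]

lemma exists_addSubgroup_card : ∀ (k : ℕ) (G : Type u) [AddCommGroup G] [Finite G],
    k ∣ Nat.card G → ∃ H : AddSubgroup G, Nat.card H = k := by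
  intro k
  induction k using Nat.strong_induction_on with
  | _ k ih =>
    intro G _ _ hdvd
    rcases eq_or_ne k 0 with rfl | hk0
    · exact absurd (Nat.eq_zero_of_zero_dvd hdvd) (Nat.card_pos).ne'
    rcases eq_or_ne k 1 with rfl | hk1
    · exact ⟨⊥, by simp⟩
    -- k ≥ 2
    have hk2 : 2 ≤ k := by omega
    set p := k.minFac with hp
    have hpprime : p.Prime := Nat.minFac_prime hk1
    haveI : Fact p.Prime := ⟨hpprime⟩
    have hpk : p ∣ k := Nat.minFac_dvd k
    cases nonempty_fintype G
    have hpcard : p ∣ Fintype.card G := by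
      rw [← Nat.card_eq_fintype_card]
      exact hpk.trans hdvd
    obtain ⟨g, hg⟩ := exists_prime_addOrderOf_dvd_card p hpcard
    set N := AddSubgroup.zmultiples g with hN
    have hNcard : Nat.card N = p := by rw [Nat.card_zmultiples, hg]
    have hcard : Nat.card G = Nat.card (G ⧸ N) * Nat.card N :=
      AddSubgroup.card_eq_card_quotient_mul_card_addSubgroup N
    have hQpos : 0 < Nat.card (G ⧸ N) := Nat.card_pos
    have hdvd' : k / p ∣ Nat.card (G ⧸ N) := by
      obtain ⟨t, ht⟩ := hdvd
      refine ⟨t, Nat.eq_of_mul_eq_mul_right hpprime.pos ?_⟩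
      calc Nat.card (G ⧸ N) * p = Nat.card G := by rw [hcard, hNcard]
        _ = k * t := ht
        _ = (k / p * p) * t := by rw [Nat.div_mul_cancel hpk]
        _ = k / p * t * p := by ring
    obtain ⟨H', hH'⟩ := ih (k / p) (Nat.div_lt_self (by omega) hpprime.one_lt) (G ⧸ N) hdvd'
    set π := QuotientAddGroup.mk' N with hπ
    have hπsurj : Function.Surjective π := QuotientAddGroup.mk'_surjective N
    refine ⟨H'.comap π, ?_⟩
    have hidx : (H'.comap π).index = H'.index := AddSubgroup.index_comap_of_surjective H' hπsurj
    have h1 : Nat.card (H'.comap π) * (H'.comap π).index = Nat.card G :=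
      AddSubgroup.card_mul_index _
    have h2 : Nat.card H' * H'.index = Nat.card (G ⧸ N) := AddSubgroup.card_mul_index _
    have hidxpos : H'.index ≠ 0 := AddSubgroup.index_ne_zero_of_finite
    -- card G = card (G⧸N) * p = (k/p) * H'.index * p
    have h3 : Nat.card (H'.comap π) * H'.index = (k / p) * p * H'.index := by
      rw [← hidx] at *
      rw [h1, hcard, hNcard, ← h2, hH']
      ring
    have h4 : Nat.card (H'.comap π) = k / p * p := Nat.eq_of_mul_eq_mul_right
      (Nat.pos_of_ne_zero hidxpos) h3
    rw [h4, Nat.div_mul_cancel hpk]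

section ValLemmas

lemma val_sum_eq {c : ℕ} [NeZero c] {h : ℕ} (a : Fin h → ZMod c)
    (hlt : ∑ i, (a i).val < c) : (∑ i, a i).val = ∑ i, (a i).val := by
  have h1 : (∑ i, a i) = ((∑ i, (a i).val : ℕ) : ZMod c) := by
    rw [Nat.cast_sum]
    exact Finset.sum_congr rfl fun i _ => (ZMod.natCast_rightInverse (a i)).symm
  rw [h1, ZMod.val_cast_of_lt hlt]

lemma all_eq_of_sum_eq {h q : ℕ} (a : Fin h → ℕ) (hle : ∀ i, a i ≤ q)
    (hsum : ∑ i, a i = h * q) : ∀ i, a i = q := by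
  by_contra hcon
  push_neg at hcon
  obtain ⟨j, hj⟩ := hcon
  have hjlt : a j < q := lt_of_le_of_ne (hle j) hj
  have hlt : ∑ i, a i < ∑ _i : Fin h, q :=
    Finset.sum_lt_sum (fun i _ => hle i) ⟨j, Finset.mem_univ j, hjlt⟩
  rw [Finset.sum_const, Finset.card_univ, Fintype.card_fin, smul_eq_mul, hsum] at hlt
  exact lt_irrefl _ hlt

end ValLemmas

lemma key_lemma : ∀ (d : ℕ) (Q : Type u) [AddCommGroup Q] [Finite Q], Nat.card Q = d →
    ∀ (h m : ℕ), 0 < h → 1 ≤ m → h * (m - 1) + 2 ≤ d →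
    ∃ B : Set Q, B.ncard = m ∧ foldSum h B ≠ Set.univ := by
  intro d
  induction d using Nat.strong_induction_on with
  | _ d ih =>
  intro Q _ _ hQd h m hh hm1 hcond
  classical
  have hd2 : 2 ≤ d := by omega
  -- structure theorem and a surjection onto a nontrivial cyclic group
  obtain ⟨ι, hι, nfun, hn, ⟨eQ⟩⟩ := AddCommGroup.equiv_directSum_zmod_of_finite' Q
  haveI := hι
  have hιne : Nonempty ι := by
    by_contra hempty
    rw [not_nonempty_iff] at hempty
    have hsub : Subsingleton Q := eQ.toEquiv.subsingleton
    have : Nat.card Q = 1 := Nat.card_eq_one_iff_unique.mpr ⟨hsub, ⟨eQ.symm 0⟩⟩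
    omega
  obtain ⟨i0⟩ := hιne
  set c := nfun i0 with hcdef
  have hc : 2 ≤ c := hn i0
  haveI : NeZero c := ⟨by omega⟩
  set φ : Q →+ ZMod c := (DFinsupp.evalAddMonoidHom i0).comp eQ.toAddMonoidHom with hφdef
  have hφ : Function.Surjective φ := by
    intro b
    refine ⟨eQ.symm (DirectSum.of (fun i => ZMod (nfun i)) i0 b), ?_⟩
    have : eQ (eQ.symm (DirectSum.of (fun i => ZMod (nfun i)) i0 b))
        = DirectSum.of (fun i => ZMod (nfun i)) i0 b := eQ.apply_symm_apply _
    show (DFinsupp.evalAddMonoidHom i0) (eQ (eQ.symm (DirectSum.of (fun i => ZMod (nfun i)) i0 b))) = b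
    rw [this]
    show (DirectSum.of (fun i => ZMod (nfun i)) i0 b) i0 = b
    exact DirectSum.of_eq_same (β := fun i => ZMod (nfun i)) i0 b
  set K := φ.ker with hKdef
  set k := Nat.card K with hkdef
  have hkpos : 0 < k := Nat.card_pos
  have hdck : d = c * k := by
    rw [← hQd, AddSubgroup.card_eq_card_quotient_mul_card_addSubgroup K]
    congr 1
    rw [show (Q ⧸ K) = (Q ⧸ φ.ker) from rfl]
    rw [Nat.card_congr (QuotientAddGroup.quotientKerEquivOfSurjective φ hφ).toEquiv]
    exact Nat.card_zmod c
  -- arithmetic setup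
  set q := (m - 1) / k with hqdef
  set r := m - q * k with hrdef
  have hdm := Nat.div_add_mod (m - 1) k
  have hmod := Nat.mod_lt (m - 1) hkpos
  have hcomm : (m-1)/k * k = k * ((m-1)/k) := Nat.mul_comm _ _
  have hr1 : 1 ≤ r := by rw [hrdef, hqdef]; omega
  have hrk : r ≤ k := by rw [hrdef, hqdef]; omega
  have hmqr : m = q * k + r := by rw [hrdef, hqdef]; omega
  have hqk : q * k ≤ m - 1 := Nat.div_mul_le_self _ _
  have hhm : h * (m - 1) + 2 ≤ c * k := by rw [← hdck]; exact hcond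
  have hq1 : h * (q * k) ≤ h * (m - 1) := Nat.mul_le_mul_left h hqk
  have hq2 : h * q * k ≤ c * k - 2 := by rw [mul_assoc]; omega
  have hqc : h * q < c := by
    by_contra hcon
    push_neg at hcon
    have : c * k ≤ h * q * k := Nat.mul_le_mul_right k hcon
    have hck2 : 2 ≤ c * k := by omega
    omega
  have hqltc : q < c := by
    have : q ≤ h * q := Nat.le_mul_of_pos_left q hh
    omega
  have hvalq : ((q : ℕ) : ZMod c).val = q := ZMod.val_cast_of_lt hqltc
  -- the section and embedding
  set ψ : ZMod c → Q := Function.surjInv hφ with hψdef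
  have hψφ : ∀ v, φ (ψ v) = v := fun v => Function.surjInv_eq hφ v
  set e : ZMod c × K → Q := fun p => ψ p.1 + ↑p.2 with hedef
  have hφe : ∀ p : ZMod c × K, φ (e p) = p.1 := by
    rintro ⟨v, z⟩
    have hz : φ (z : Q) = 0 := z.2
    simp only [hedef, map_add, hψφ, hz, add_zero]
  have he_inj : Function.Injective e := by
    rintro ⟨v1, z1⟩ ⟨v2, z2⟩ hevz
    have h1 : v1 = v2 := by
      have e1 := hφe ⟨v1, z1⟩
      have e2 := hφe ⟨v2, z2⟩
      simp only at e1 e2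
      rw [← e1, ← e2, hevz]
    subst h1
    have h2 : (z1 : Q) = z2 := by
      simp only [hedef] at hevz
      exact add_left_cancel hevz
    exact Prod.ext rfl (Subtype.ext h2)
  -- generic construction facts
  set T1 : Set (ZMod c × K) := {v : ZMod c | v.val < q} ×ˢ Set.univ with hT1def
  have hvalset : ({v : ZMod c | v.val < q}).ncard = q := by
    have himg : {v : ZMod c | v.val < q} = (fun n : ℕ => (n : ZMod c)) '' Set.Iio q := by
      ext v
      constructor
      · intro hv
        exact ⟨v.val, hv, ZMod.natCast_rightInverse v⟩
      · rintro ⟨n, hn', rfl⟩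
        show ((n : ZMod c)).val < q
        rwa [ZMod.val_cast_of_lt (lt_trans hn' hqltc)]
    rw [himg, Set.ncard_image_of_injOn, ← Finset.coe_range, Set.ncard_coe_finset,
      Finset.card_range]
    intro a ha b hb hab
    simp only at hab
    have h2 : ((a : ZMod c)).val = ((b : ZMod c)).val := by rw [hab]
    rwa [ZMod.val_cast_of_lt (lt_trans ha hqltc), ZMod.val_cast_of_lt (lt_trans hb hqltc)] at h2
  have hBcard : ∀ C₀ : Set K, C₀.ncard = r →
      (e '' (T1 ∪ ({((q : ℕ) : ZMod c)} ×ˢ C₀))).ncard = m := by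
    intro C₀ hC₀
    rw [Set.ncard_image_of_injective _ he_inj]
    have hdisj : Disjoint T1 ({((q : ℕ) : ZMod c)} ×ˢ C₀) := by
      rw [Set.disjoint_left]
      rintro ⟨v, z⟩ hp1 hp2
      rw [hT1def, Set.mem_prod] at hp1
      rw [Set.mem_prod] at hp2
      have : v = ((q : ℕ) : ZMod c) := hp2.1
      rw [this] at hp1
      have := hp1.1
      simp only [Set.mem_setOf_eq, hvalq] at this
      omega
    rw [Set.ncard_union_eq hdisj (Set.toFinite _) (Set.toFinite _)]
    rw [hT1def, ncard_sprod, ncard_sprod, hvalset, Set.ncard_univ, Set.ncard_singleton, hC₀,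
      one_mul, ← hkdef, ← hmqr]
  have hBmem : ∀ C₀ : Set K, ∀ x ∈ e '' (T1 ∪ ({((q : ℕ) : ZMod c)} ×ˢ C₀)),
      (φ x).val ≤ q ∧ ((φ x).val = q → ∃ z ∈ C₀, x = ψ ((q : ℕ) : ZMod c) + ↑z) := by
    rintro C₀ x ⟨⟨v, z⟩, hp, rfl⟩
    rw [hφe ⟨v, z⟩]
    rcases hp with hp | hp
    · rw [hT1def, Set.mem_prod] at hp
      have hv : v.val < q := hp.1
      exact ⟨le_of_lt hv, fun hEq => absurd hEq (ne_of_lt hv)⟩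
    · rw [Set.mem_prod, Set.mem_singleton_iff] at hp
      obtain ⟨rfl, hz⟩ := hp
      exact ⟨le_of_eq hvalq, fun _ => ⟨z, hz, rfl⟩⟩
  by_cases hcase : h * q + 2 ≤ c
  · -- easy case: `h*q ≤ c-2`, the top fiber is missed entirely
    obtain ⟨C₀, hC₀sub, hC₀card⟩ := Set.exists_subset_card_eq
      (show r ≤ (Set.univ : Set ↥K).ncard by rw [Set.ncard_univ]; exact hrk)
    refine ⟨e '' (T1 ∪ ({((q : ℕ) : ZMod c)} ×ˢ C₀)), hBcard C₀ hC₀card, ?_⟩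
    intro hEq
    have hy : ψ ((c - 1 : ℕ) : ZMod c) ∈ foldSum h (e '' (T1 ∪ ({((q : ℕ) : ZMod c)} ×ˢ C₀))) := by
      rw [hEq]; exact Set.mem_univ _
    obtain ⟨f, hf, hfsum⟩ := hy
    have hvle : ∀ i, (φ (f i)).val ≤ q := fun i => (hBmem C₀ (f i) (hf i)).1
    have hsumle : ∑ i, (φ (f i)).val ≤ h * q := by
      calc ∑ i, (φ (f i)).val ≤ ∑ _i : Fin h, q := Finset.sum_le_sum fun i _ => hvle i
        _ = h * q := by rw [Finset.sum_const, Finset.card_univ, Fintype.card_fin, smul_eq_mul]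
    have hvalsum : (φ (ψ ((c - 1 : ℕ) : ZMod c))).val = ∑ i, (φ (f i)).val := by
      rw [← hfsum, map_sum]
      exact val_sum_eq _ (by omega)
    rw [hψφ, ZMod.val_cast_of_lt (show c - 1 < c by omega)] at hvalsum
    omega
  · -- hard case: `h*q = c-1`, recurse into the kernel
    push_neg at hcase
    have hqc1 : h * q = c - 1 := by omega
    have hsplit : m - 1 = q * k + (r - 1) := by omega
    have hmul : h * (m - 1) = h * q * k + h * (r - 1) := by
      rw [hsplit, Nat.mul_add, ← mul_assoc]
    have hck : (c - 1) * k = c * k - k := by rw [Nat.sub_mul, one_mul]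
    have hkck : k ≤ c * k := Nat.le_mul_of_pos_left k (by omega)
    have hindbound : h * (r - 1) + 2 ≤ k := by
      rw [hmul, hqc1, hck] at hhm
      omega
    have hkd : k < d := by
      rw [hdck]
      have h2k : 2 * k ≤ c * k := Nat.mul_le_mul_right k hc
      omega
    obtain ⟨C₀, hC₀card, hC₀ne⟩ := ih k hkd (↥K) hkdef.symm h r hh hr1 hindbound
    obtain ⟨w, hw⟩ := (Set.ne_univ_iff_exists_notMem _).mp hC₀ne
    refine ⟨e '' (T1 ∪ ({((q : ℕ) : ZMod c)} ×ˢ C₀)), hBcard C₀ hC₀card, ?_⟩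
    intro hEq
    have hy : h • ψ ((q : ℕ) : ZMod c) + (w : Q)
        ∈ foldSum h (e '' (T1 ∪ ({((q : ℕ) : ZMod c)} ×ˢ C₀))) := by
      rw [hEq]; exact Set.mem_univ _
    obtain ⟨f, hf, hfsum⟩ := hy
    have hvle : ∀ i, (φ (f i)).val ≤ q := fun i => (hBmem C₀ (f i) (hf i)).1
    have hsumle : ∑ i, (φ (f i)).val ≤ h * q := by
      calc ∑ i, (φ (f i)).val ≤ ∑ _i : Fin h, q := Finset.sum_le_sum fun i _ => hvle i
        _ = h * q := by rw [Finset.sum_const, Finset.card_univ, Fintype.card_fin, smul_eq_mul]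
    have hφy : φ (h • ψ ((q : ℕ) : ZMod c) + (w : Q)) = ((h * q : ℕ) : ZMod c) := by
      rw [map_add, map_nsmul, hψφ]
      have hw0 : φ (w : Q) = 0 := w.2
      rw [hw0, add_zero, nsmul_eq_mul]
      push_cast
      ring
    have hvalsum : ∑ i, (φ (f i)).val = h * q := by
      have h1 : (φ (h • ψ ((q : ℕ) : ZMod c) + (w : Q))).val = ∑ i, (φ (f i)).val := by
        rw [← hfsum, map_sum]
        exact val_sum_eq _ (by omega)
      rw [hφy, ZMod.val_cast_of_lt (show h * q < c by omega)] at h1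
      exact h1.symm
    have hallq : ∀ i, (φ (f i)).val = q := all_eq_of_sum_eq _ hvle hvalsum
    have hfz : ∀ i, ∃ z ∈ C₀, f i = ψ ((q : ℕ) : ZMod c) + ↑z := fun i =>
      (hBmem C₀ (f i) (hf i)).2 (hallq i)
    choose z hz hfi using hfz
    have hsum2 : ∑ i, f i = h • ψ ((q : ℕ) : ZMod c) + ((∑ i, z i : K) : Q) := by
      calc ∑ i, f i = ∑ i, (ψ ((q : ℕ) : ZMod c) + (z i : Q)) :=
            Finset.sum_congr rfl fun i _ => hfi i
        _ = (∑ _i : Fin h, ψ ((q : ℕ) : ZMod c)) + ∑ i, (z i : Q) := Finset.sum_add_distrib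
        _ = h • ψ ((q : ℕ) : ZMod c) + ((∑ i, z i : K) : Q) := by
            rw [Finset.sum_const, Finset.card_univ, Fintype.card_fin]
            congr 1
            exact (map_sum K.subtype z Finset.univ).symm
    have hweq : (∑ i, z i : K) = w := by
      have h2 := hfsum
      rw [hsum2] at h2
      exact Subtype.ext (add_left_cancel h2)
    exact hw ⟨z, hz, hweq⟩

theorem exists_incomplete_of_card_vmax {G : Type*} [AddCommGroup G] [Fintype G]
    (hn : 2 ≤ Fintype.card G) (h : ℕ) (hh : 0 < h) :
    ∃ A : Set G, A.ncard = vmax (Fintype.card G) h ∧ foldSum h A ≠ Set.univ := by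
  classical
  set n := Fintype.card G with hndef
  have hn0 : n ≠ 0 := by omega
  haveI : Nonempty G := Fintype.card_pos_iff.mp (by omega)
  obtain ⟨d₀, hd₀mem, hsup⟩ := Finset.exists_mem_eq_sup n.divisors
    (Nat.nonempty_divisors.mpr hn0) (fun d => ((((d : ℤ) - 2) / h + 1) * ((n : ℤ) / d)).toNat)
  obtain ⟨hd₀dvd, -⟩ := Nat.mem_divisors.mp hd₀mem
  have hd₀pos : 0 < d₀ := Nat.pos_of_dvd_of_pos hd₀dvd (by omega)
  set k₀ := n / d₀ with hk₀def
  have hk₀ : d₀ * k₀ = n := Nat.mul_div_cancel' hd₀dvd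
  have hk₀pos : 0 < k₀ := by
    rcases Nat.eq_zero_or_pos k₀ with h0 | h0
    · rw [h0, mul_zero] at hk₀; omega
    · exact h0
  set F : ℤ := ((d₀ : ℤ) - 2) / h + 1 with hFdef
  have hhz : (0 : ℤ) < h := by exact_mod_cast hh
  have hF0 : 0 ≤ F := by
    have h1 : (-1 : ℤ) ≤ ((d₀ : ℤ) - 2) / h := by
      rw [Int.le_ediv_iff_mul_le hhz]
      have : (1 : ℤ) ≤ d₀ := by exact_mod_cast hd₀pos
      have : (1 : ℤ) ≤ h := by exact_mod_cast hh
      nlinarith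
    omega
  set m₀ := F.toNat with hm₀def
  have hm₀F : (m₀ : ℤ) = F := Int.toNat_of_nonneg hF0
  have hvm : vmax n h = m₀ * k₀ := by
    rw [vmax, hsup]
    have hdiv : (n : ℤ) / (d₀ : ℤ) = (k₀ : ℤ) := by
      rw [hk₀def, Int.natCast_div]
    rw [hdiv, ← hm₀F]
    push_cast
    exact Int.toNat_natCast _
  rcases Nat.eq_zero_or_pos m₀ with hm₀0 | hm₀1
  · refine ⟨∅, ?_, ?_⟩
    · rw [Set.ncard_empty, hvm, hm₀0, zero_mul]
    · rw [foldSum_empty hh]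
      exact Set.empty_ne_univ
  · -- main case
    have hcond : h * (m₀ - 1) + 2 ≤ d₀ := by
      have hne : (h : ℤ) ≠ 0 := by exact_mod_cast hh.ne'
      have hdm := Int.mul_ediv_add_emod ((d₀ : ℤ) - 2) h
      have hmod := Int.emod_nonneg ((d₀ : ℤ) - 2) hne
      have hA : (h : ℤ) * (((d₀ : ℤ) - 2) / h) ≤ (d₀ : ℤ) - 2 := by omega
      have h1 : (h : ℤ) * ((m₀ : ℤ) - 1) ≤ (d₀ : ℤ) - 2 := by
        rw [hm₀F, hFdef, add_sub_cancel_right]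
        exact hA
      zify [hm₀1]
      linarith
    have hk₀dvd : k₀ ∣ Nat.card G := ⟨d₀, by rw [Nat.card_eq_fintype_card, ← hndef, ← hk₀, mul_comm]⟩
    obtain ⟨H, hH⟩ := exists_addSubgroup_card k₀ G hk₀dvd
    set π := QuotientAddGroup.mk' H with hπdef
    have hπsurj : Function.Surjective π := QuotientAddGroup.mk'_surjective H
    have hcardQ : Nat.card (G ⧸ H) = d₀ := by
      have h1 : Nat.card G = Nat.card (G ⧸ H) * Nat.card H :=
        AddSubgroup.card_eq_card_quotient_mul_card_addSubgroup H
      rw [Nat.card_eq_fintype_card, ← hndef, hH] at h1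
      have : d₀ * k₀ = Nat.card (G ⧸ H) * k₀ := by rw [hk₀, h1]
      exact (Nat.eq_of_mul_eq_mul_right hk₀pos this).symm
    obtain ⟨B, hBcard, hBne⟩ := key_lemma d₀ (G ⧸ H) hcardQ h m₀ hh hm₀1 hcond
    refine ⟨π ⁻¹' B, ?_, ?_⟩
    · rw [ncard_preimage π hπsurj B, hBcard, hvm]
      congr 1
      rw [hπdef, QuotientAddGroup.ker_mk', hH]
    · rw [foldSum_preimage π hπsurj hh B]
      intro hEq
      apply hBne
      apply Set.eq_univ_of_univ_subset
      have h2 : Set.range π ⊆ foldSum h B := Set.preimage_eq_univ_iff.mp hEq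
      rwa [hπsurj.range_eq] at h2
end

section
/- Let G be a finite abelian group of order n, H a subgroup of G of index d > 1 such that G/H is of type (d₁,...,d_t) (i.e., G/H ≅ Z_{d₁} × ... × Z_{d_t} with d₁ ≥ 2 and d_i | d_{i+1}). Let c₁,...,c_t be positive integers with c_i ≤ d_i - 1, and suppose Σ_{i=1}^t ⌈(d_i-1)/c_i⌉ ≥ s+1. Then χ̂(G,[0,s]) ≥ (1 + Σ_{i=1}^t c_i)·(n/d) + 1; i.e., there exists a generating subset A of G with |A| = (1 + Σ c_i)·(n/d) and [0,s]A ≠ G. -/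
section Aux

variable {t : ℕ}

/-- The pattern set in the product of cyclic groups. -/
noncomputable def patternSet (d c : Fin t → ℕ) [∀ i, NeZero (d i)] :
    Finset (∀ i, ZMod (d i)) :=
  insert 0 (Finset.univ.biUnion fun i =>
    (Finset.Icc 1 (c i)).image fun k : ℕ => (Pi.single i ((k : ZMod (d i))) : ∀ i, ZMod (d i)))

variable (d c : Fin t → ℕ) [∀ i, NeZero (d i)]

lemma patternSet_eq : patternSet d c =
    insert 0 (Finset.univ.biUnion fun i =>
      (Finset.Icc 1 (c i)).image fun k : ℕ =>
        (Pi.single i ((k : ZMod (d i))) : ∀ i, ZMod (d i))) := rfl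

lemma val_cast_eq (hd2 : ∀ i, 2 ≤ d i) (hc2 : ∀ i, c i ≤ d i - 1) (i : Fin t) {k : ℕ}
    (hk : k ≤ c i) : ((k : ZMod (d i))).val = k := by
  rw [ZMod.val_natCast, Nat.mod_eq_of_lt]
  have := hd2 i; have := hc2 i; omega

lemma cast_ne_zero (hd2 : ∀ i, 2 ≤ d i) (hc2 : ∀ i, c i ≤ d i - 1) (i : Fin t) {k : ℕ}
    (h1 : 1 ≤ k) (hk : k ≤ c i) : ((k : ZMod (d i))) ≠ 0 := by
  intro h
  have := val_cast_eq d c hd2 hc2 i hk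
  rw [h] at this
  simp only [ZMod.val_zero] at this
  omega

lemma patternSet_card (hd2 : ∀ i, 2 ≤ d i) (hc2 : ∀ i, c i ≤ d i - 1) :
    (patternSet d c).card = 1 + ∑ i, c i := by
  classical
  have himg : ∀ i : Fin t, ((Finset.Icc 1 (c i)).image fun k : ℕ =>
      (Pi.single i ((k : ZMod (d i))) : ∀ i, ZMod (d i))).card = c i := by
    intro i
    rw [Finset.card_image_of_injOn, Nat.card_Icc]
    · omega
    intro k hk k' hk' he
    simp only [Finset.mem_coe, Finset.mem_Icc] at hk hk'
    have hfk := congrFun he i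
    simp only [Pi.single_eq_same] at hfk
    have h1 := val_cast_eq d c hd2 hc2 i hk.2
    have h2 := val_cast_eq d c hd2 hc2 i hk'.2
    rw [hfk] at h1; omega
  rw [patternSet_eq, Finset.card_insert_of_notMem, Finset.card_biUnion]
  · simp only [himg]
    omega
  · intro i _ i' _ hii'
    simp only [Finset.disjoint_left, Finset.mem_image, Finset.mem_Icc]
    rintro x ⟨k, hk, rfl⟩ ⟨k', hk', he⟩
    have hco := congrFun he i'
    rw [Pi.single_eq_same, Pi.single_eq_of_ne (Ne.symm hii')] at hco
    exact cast_ne_zero d c hd2 hc2 i' hk'.1 hk'.2 hco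
  · intro hmem
    simp only [Finset.mem_biUnion, Finset.mem_image, Finset.mem_Icc] at hmem
    obtain ⟨i, -, k, hk, he⟩ := hmem
    have hco := congrFun he i
    rw [Pi.single_eq_same] at hco
    exact cast_ne_zero d c hd2 hc2 i hk.1 hk.2 hco

lemma patternSet_closure (hc1 : ∀ i, 1 ≤ c i) :
    AddSubgroup.closure ((patternSet d c : Finset (∀ i, ZMod (d i))) : Set (∀ i, ZMod (d i))) = ⊤ := by
  classical
  rw [eq_top_iff]
  intro x _
  have hx : x = ∑ i, Pi.single i (x i) := (Finset.univ_sum_single x).symm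
  rw [hx]
  refine AddSubgroup.sum_mem _ fun i _ => ?_
  have hone : (Pi.single i ((1 : ℕ) : ZMod (d i)) : ∀ i, ZMod (d i)) ∈ patternSet d c := by
    rw [patternSet_eq]
    exact Finset.mem_insert_of_mem (Finset.mem_biUnion.2 ⟨i, Finset.mem_univ i,
      Finset.mem_image.2 ⟨1, Finset.mem_Icc.2 ⟨le_refl 1, hc1 i⟩, rfl⟩⟩)
  have key : Pi.single i (x i) =
      (x i).val • (Pi.single i ((1 : ℕ) : ZMod (d i)) : ∀ i, ZMod (d i)) := by
    rw [← Pi.single_smul]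
    congr 1
    rw [Nat.cast_one, nsmul_eq_mul, mul_one, ZMod.natCast_val, ZMod.cast_id]
  rw [key]
  exact AddSubgroup.nsmul_mem _ (AddSubgroup.subset_closure hone) _

lemma patternSet_sum_bound (hd2 : ∀ i, 2 ≤ d i) (hc1 : ∀ i, 1 ≤ c i) (hc2 : ∀ i, c i ≤ d i - 1)
    {h : ℕ} (y : Fin h → (∀ i, ZMod (d i)))
    (hy : ∀ j, y j ∈ patternSet d c) (hsum : ∑ j, y j = fun i => -1) :
    ∑ i, (d i - 1 + c i - 1) / c i ≤ h := by
  classical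
  simp only [patternSet_eq, Finset.mem_insert, Finset.mem_biUnion, Finset.mem_image,
    Finset.mem_Icc] at hy
  set κ : Fin t → Fin h → ℕ := fun i j => (y j i).val with hκ
  have κ_le : ∀ i j, κ i j ≤ c i := by
    intro i j
    rcases hy j with h0 | ⟨i', -, k, hk, he⟩
    · simp [hκ, h0]
    · by_cases hii : i' = i
      · subst hii
        have hval : κ i' j = k := by
          simp only [hκ]
          rw [← he, Pi.single_eq_same, val_cast_eq d c hd2 hc2 i' hk.2]
        rw [hval]; exact hk.2
      · have hval : κ i j = 0 := by
          simp only [hκ]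
          rw [← he, Pi.single_eq_of_ne (Ne.symm hii)]
          simp
        simp [hval]
  have sum_mod : ∀ i, (∑ j, κ i j) % d i = d i - 1 := by
    intro i
    have hcast : ((∑ j, κ i j : ℕ) : ZMod (d i)) = ((d i - 1 : ℕ) : ZMod (d i)) := by
      push_cast [hκ]
      simp only [ZMod.natCast_val, ZMod.cast_id]
      have hi : ∑ j, y j i = (-1 : ZMod (d i)) := by
        rw [show (∑ j, y j i) = (∑ j, y j) i from (Finset.sum_apply _ _ _).symm, hsum]
      rw [hi]
      have h1 : ((d i - 1 : ℕ) : ZMod (d i)) = (d i : ZMod (d i)) - 1 := by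
        push_cast [Nat.cast_sub (by have := hd2 i; omega : 1 ≤ d i)]
        ring
      rw [h1, ZMod.natCast_self, zero_sub]
    have hmod : (∑ j, κ i j) % d i = (d i - 1) % d i :=
      (ZMod.natCast_eq_natCast_iff _ _ _).1 hcast
    rw [hmod, Nat.mod_eq_of_lt]
    have := hd2 i; omega
  set T : Fin t → Finset (Fin h) := fun i => Finset.univ.filter fun j => κ i j ≠ 0 with hT
  have card_bound : ∀ i, (d i - 1 + c i - 1) / c i ≤ (T i).card := by
    intro i
    have h1 : d i - 1 ≤ ∑ j, κ i j := by
      have := Nat.mod_le (∑ j, κ i j) (d i)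
      rw [sum_mod i] at this
      exact this
    have h2 : ∑ j, κ i j ≤ (T i).card * c i := by
      have heq : ∑ j, κ i j = ∑ j ∈ T i, κ i j := (Finset.sum_filter_ne_zero _).symm
      rw [heq]
      exact Finset.sum_le_card_nsmul _ _ _ fun j _ => κ_le i j
    have hc : 0 < c i := hc1 i
    have h3 : d i - 1 ≤ (T i).card * c i := h1.trans h2
    have hlt : d i - 1 + c i - 1 < ((T i).card + 1) * c i := by
      have hexp : ((T i).card + 1) * c i = (T i).card * c i + c i := by ring
      omega
    have := (Nat.div_lt_iff_lt_mul hc).2 hlt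
    omega
  have disj : ∀ i ∈ Finset.univ, ∀ i' ∈ Finset.univ, i ≠ i' →
      Disjoint (T i) (T i') := by
    intro i _ i' _ hii
    simp only [Finset.disjoint_left, hT, Finset.mem_filter, Finset.mem_univ, true_and]
    rintro j hji hji'
    rcases hy j with h0 | ⟨i₀, -, k, hk, he⟩
    · exact hji (by simp [hκ, h0])
    · have hi : i = i₀ := by
        by_contra hne
        refine hji ?_
        simp only [hκ]
        rw [← he, Pi.single_eq_of_ne hne]
        simp
      have hi' : i' = i₀ := by
        by_contra hne
        refine hji' ?_
        simp only [hκ]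
        rw [← he, Pi.single_eq_of_ne hne]
        simp
      exact hii (hi.trans hi'.symm)
  calc ∑ i, (d i - 1 + c i - 1) / c i ≤ ∑ i, (T i).card :=
        Finset.sum_le_sum fun i _ => card_bound i
    _ = (Finset.univ.biUnion T).card := (Finset.card_biUnion disj).symm
    _ ≤ h := (Finset.card_le_univ _).trans (le_of_eq (Fintype.card_fin h))

end Aux

lemma card_preimage_mk_add {G : Type*} [AddCommGroup G] (H : AddSubgroup G)
    (t : Set (G ⧸ H)) :
    Nat.card (QuotientAddGroup.mk ⁻¹' t : Set G) = Nat.card H * Nat.card t := by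
  rw [← Nat.card_prod,
    Nat.card_congr (QuotientAddGroup.preimageMkEquivAddSubgroupProdSet _ _)]

theorem chiHat_interval_lower_bound {G : Type*} [AddCommGroup G] [Fintype G]
    (H : AddSubgroup G) (hind : 1 < H.index)
    (t : ℕ) (ht : 0 < t) (d : Fin t → ℕ) (hd2 : ∀ i, 2 ≤ d i)
    (hdvd : ∀ i j : Fin t, i ≤ j → d i ∣ d j)
    (iso : (G ⧸ H) ≃+ (∀ i, ZMod (d i)))
    (c : Fin t → ℕ) (hc1 : ∀ i, 1 ≤ c i) (hc2 : ∀ i, c i ≤ d i - 1)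
    (s : ℕ) (hs : 0 < s)
    (hsum : s + 1 ≤ ∑ i, (d i - 1 + c i - 1) / c i) :
    (∃ A : Set G, AddSubgroup.closure A = ⊤ ∧
        A.ncard = (1 + ∑ i, c i) * (Fintype.card G / H.index) ∧
        intervalSum s A ≠ Set.univ) ∧
    (1 + ∑ i, c i) * (Fintype.card G / H.index) + 1 ≤
      sInf {m : ℕ | ∀ A : Set G, AddSubgroup.closure A = ⊤ → m ≤ A.ncard →
        intervalSum s A = Set.univ} := by
  classical
  haveI : ∀ i, NeZero (d i) := fun i => ⟨by have := hd2 i; omega⟩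
  set φ : G →+ ∀ i, ZMod (d i) :=
    iso.toAddMonoidHom.comp (QuotientAddGroup.mk' H) with hφ
  have φsurj : Function.Surjective φ := by
    intro x
    obtain ⟨q, hq⟩ := iso.surjective x
    obtain ⟨g, hg⟩ := QuotientAddGroup.mk'_surjective H q
    refine ⟨g, ?_⟩
    rw [hφ]
    show iso ((QuotientAddGroup.mk' H) g) = x
    rw [hg, hq]
  set S := patternSet d c with hS
  set A : Set G := φ ⁻¹' ↑S with hA
  have h0S : (0 : ∀ i, ZMod (d i)) ∈ S := by
    rw [hS, patternSet_eq]; exact Finset.mem_insert_self _ _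
  have hA0 : ∀ g : G, φ g = 0 → g ∈ A := by
    intro g hg
    rw [hA, Set.mem_preimage, hg]
    exact h0S
  -- closure = ⊤
  have hclos : AddSubgroup.closure A = ⊤ := by
    rw [eq_top_iff]
    intro g _
    have h1 : (AddSubgroup.closure A).map φ = ⊤ := by
      rw [AddMonoidHom.map_closure, hA, Set.image_preimage_eq _ φsurj]
      exact patternSet_closure d c hc1
    have h2 : φ g ∈ (AddSubgroup.closure A).map φ := by
      rw [h1]; trivial
    obtain ⟨a, ha, hag⟩ := AddSubgroup.mem_map.1 h2
    have hmem : g - a ∈ A := hA0 _ (by rw [map_sub, hag, sub_self])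
    have := AddSubgroup.add_mem _ (AddSubgroup.subset_closure hmem) ha
    simpa using this
  -- cardinality
  have hcardA : A.ncard = (1 + ∑ i, c i) * (Fintype.card G / H.index) := by
    have hAeq : A = QuotientAddGroup.mk ⁻¹' (⇑iso ⁻¹' (↑S : Set (∀ i, ZMod (d i)))) := rfl
    have h1 : Nat.card A = Nat.card H * Nat.card (⇑iso ⁻¹' (↑S : Set (∀ i, ZMod (d i)))) := by
      rw [hAeq, card_preimage_mk_add]
    have h2 : Nat.card (⇑iso ⁻¹' (↑S : Set (∀ i, ZMod (d i)))) = Nat.card (↑S : Set (∀ i, ZMod (d i))) :=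
      Nat.card_preimage_of_injective iso.injective (fun x _ => iso.surjective x)
    have h3 : Nat.card (↑S : Set (∀ i, ZMod (d i))) = 1 + ∑ i, c i := by
      rw [Nat.card_coe_set_eq, Set.ncard_coe_finset, hS, patternSet_card d c hd2 hc2]
    have h4 : Nat.card H = Fintype.card G / H.index := by
      have hmul := AddSubgroup.index_mul_card H
      rw [← Nat.card_eq_fintype_card, ← hmul, Nat.mul_div_cancel_left _ (by omega : 0 < H.index)]
    rw [← Nat.card_coe_set_eq, h1, h2, h3, h4, Nat.mul_comm]
  -- interval sum misses an element
  have hne : intervalSum s A ≠ Set.univ := by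
    intro hcontra
    obtain ⟨g₀, hg₀⟩ := φsurj (fun i => (-1 : ZMod (d i)))
    have hmem : g₀ ∈ intervalSum s A := hcontra ▸ Set.mem_univ g₀
    simp only [intervalSum, Set.mem_iUnion, foldSum, Set.mem_setOf_eq,
      Finset.mem_range] at hmem
    obtain ⟨h, hh, f, hf, hsumf⟩ := hmem
    have hbound : ∑ i, (d i - 1 + c i - 1) / c i ≤ h := by
      refine patternSet_sum_bound d c hd2 hc1 hc2 (fun j => φ (f j))
        (fun j => Finset.mem_coe.1 (hf j)) ?_
      rw [← map_sum, hsumf, hg₀]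
    omega
  refine ⟨⟨A, hclos, hcardA, hne⟩, ?_⟩
  refine le_csInf ?_ ?_
  · refine ⟨Fintype.card G + 1, fun B hB hcard => absurd hcard ?_⟩
    have : B.ncard ≤ Fintype.card G := by
      have := Set.ncard_le_ncard (Set.subset_univ B) Set.finite_univ
      rwa [Set.ncard_univ, Nat.card_eq_fintype_card] at this
    omega
  · intro m hm
    by_contra hlt
    push_neg at hlt
    exact hne (hm A hclos (by omega))
end

section
/- Let K = Z_{d₁} × ... × Z_{d_t}, let c_i be positive integers with c_i ≤ d_i - 1 for each i, and for each i let B_i = {0}^{i-1} × {1,...,c_i} × {0}^{t-i}, and let B = {0} ∪ B₁ ∪ ... ∪ B_t. Then ⟨B⟩ = K, |B| = 1 + Σ_{i=1}^t c_i, and if Σ_{i=1}^t ⌈(d_i-1)/c_i⌉ ≥ s+1 then [0,s]B ≠ K. -/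
theorem quotient_construction {t : ℕ} (ht : 0 < t) (d : Fin t → ℕ) (hd2 : ∀ i, 2 ≤ d i)
    (c : Fin t → ℕ) (hc1 : ∀ i, 1 ≤ c i) (hc2 : ∀ i, c i ≤ d i - 1) (s : ℕ)
    (B : Set (∀ i, ZMod (d i)))
    (hB : B = {0} ∪ ⋃ i, {x | (∃ m : ℕ, 1 ≤ m ∧ m ≤ c i ∧ x i = (m : ZMod (d i))) ∧
        ∀ j, j ≠ i → x j = 0}) :
    AddSubgroup.closure B = ⊤ ∧ B.ncard = 1 + ∑ i, c i ∧
    (s + 1 ≤ ∑ i, (d i - 1 + c i - 1) / c i → intervalSum s B ≠ Set.univ) := by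
  haveI : ∀ i, NeZero (d i) := fun i => ⟨by have := hd2 i; omega⟩
  -- basic membership: Pi.single i (m : ZMod (d i)) ∈ B for 1 ≤ m ≤ c i
  have hsingle : ∀ (i : Fin t) (m : ℕ), 1 ≤ m → m ≤ c i →
      Pi.single i ((m : ZMod (d i))) ∈ B := by
    intro i m hm1 hm2
    rw [hB]
    right
    refine Set.mem_iUnion.2 ⟨i, ⟨⟨m, hm1, hm2, by simp⟩, fun j hj => ?_⟩⟩
    simp [Pi.single_eq_of_ne hj]
  refine ⟨?_, ?_, ?_⟩
  · -- closure = ⊤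
    rw [eq_top_iff]
    intro x _
    have hx : x = ∑ i, Pi.single i (x i) := (Finset.univ_sum_single x).symm
    rw [hx]
    refine AddSubgroup.sum_mem _ fun i _ => ?_
    have h1 : Pi.single i ((1 : ZMod (d i))) ∈ AddSubgroup.closure B := by
      apply AddSubgroup.subset_closure
      simpa using hsingle i 1 le_rfl (hc1 i)
    have := AddSubgroup.nsmul_mem _ h1 (x i).val
    have hval : ((x i).val • Pi.single i ((1 : ZMod (d i))) : ∀ i', ZMod (d i')) = Pi.single i (x i) := by
      rw [← Pi.single_smul]
      exact congrArg _ (by rw [nsmul_eq_mul, mul_one]; exact ZMod.natCast_rightInverse (x i))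
    rwa [hval] at this
  · -- cardinality
    have hne : ∀ (i : Fin t) (m : ℕ), 1 ≤ m → m ≤ c i → ((m : ZMod (d i))) ≠ 0 := by
      intro i m hm1 hm2 h0
      rw [ZMod.natCast_eq_zero_iff] at h0
      have := Nat.le_of_dvd (by omega) h0
      have := hc2 i; have := hd2 i; omega
    set F : Fin t → Finset (∀ i, ZMod (d i)) :=
      fun i => (Finset.Icc 1 (c i)).image
        (fun m : ℕ => (Pi.single i ((Nat.cast m : ZMod (d i))) : ∀ i', ZMod (d i'))) with hF
    have hFi : ∀ i, {x : ∀ i, ZMod (d i) |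
        (∃ m : ℕ, 1 ≤ m ∧ m ≤ c i ∧ x i = (m : ZMod (d i))) ∧ ∀ j, j ≠ i → x j = 0}
        = ↑(F i) := by
      intro i
      ext x
      simp only [Set.mem_setOf_eq, hF, Finset.coe_image, Set.mem_image, Finset.mem_coe,
        Finset.mem_Icc]
      constructor
      · rintro ⟨⟨m, hm1, hm2, hmi⟩, hz⟩
        refine ⟨m, ⟨hm1, hm2⟩, ?_⟩
        funext j
        by_cases hj : j = i
        · subst hj; simp [hmi]
        · rw [Pi.single_eq_of_ne hj, hz j hj]
      · rintro ⟨m, ⟨hm1, hm2⟩, rfl⟩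
        exact ⟨⟨m, hm1, hm2, by simp⟩, fun j hj => Pi.single_eq_of_ne hj _⟩
    have hBF : B = ↑(insert (0 : ∀ i, ZMod (d i)) (Finset.univ.biUnion F)) := by
      rw [hB]
      simp only [hFi]
      rw [Finset.coe_insert, Finset.coe_biUnion, Finset.coe_univ, Set.biUnion_univ,
        Set.insert_eq]
    rw [hBF, Set.ncard_coe_finset]
    have h0notin : (0 : ∀ i, ZMod (d i)) ∉ Finset.univ.biUnion F := by
      simp only [Finset.mem_biUnion, hF, Finset.mem_image, Finset.mem_Icc, not_exists]
      rintro i ⟨_, ⟨m, ⟨hm1, hm2⟩, hm0⟩⟩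
      have := congrFun hm0 i
      simp only [Pi.single_eq_same, Pi.zero_apply] at this
      exact hne i m hm1 hm2 this
    rw [Finset.card_insert_of_notMem h0notin]
    have hdisj : ∀ i ∈ Finset.univ, ∀ j ∈ Finset.univ, i ≠ j →
        Disjoint (F i) ((F : Fin t → Finset (∀ i, ZMod (d i))) j) := by
      intro i _ j _ hij
      rw [Finset.disjoint_left]
      intro x hxi hxj
      rw [hF] at hxi hxj
      simp only [Finset.mem_image, Finset.mem_Icc] at hxi hxj
      obtain ⟨m, ⟨hm1, hm2⟩, rfl⟩ := hxi
      obtain ⟨m', ⟨hm1', hm2'⟩, heq⟩ := hxj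
      have h := congrFun heq i
      rw [Pi.single_eq_of_ne hij, Pi.single_eq_same] at h
      exact hne i m hm1 hm2 h.symm
    rw [Finset.card_biUnion hdisj]
    have hcard : ∀ i, (F i).card = c i := by
      intro i
      rw [hF]
      rw [Finset.card_image_of_injOn, Nat.card_Icc]
      · omega
      · intro m hm m' hm' heq
        rw [Finset.mem_coe, Finset.mem_Icc] at hm hm'
        have := congrFun heq i
        simp only [Pi.single_eq_same] at this
        have h1 : m < d i := by have := hc2 i; have := hd2 i; omega
        have h2 : m' < d i := by have := hc2 i; have := hd2 i; omega
        have := congrArg ZMod.val this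
        rwa [ZMod.val_cast_of_lt h1, ZMod.val_cast_of_lt h2] at this
    simp [hcard, add_comm]
  · -- non-covering
    intro hsum hcov
    -- target element
    set x : ∀ i, ZMod (d i) := fun i => (-1 : ZMod (d i)) with hxdef
    have hx : x ∈ intervalSum s B := hcov ▸ Set.mem_univ x
    obtain ⟨h, hh, f, hfB, hfsum⟩ : ∃ h, h ∈ Finset.range (s+1) ∧
        ∃ f : Fin h → (∀ i, ZMod (d i)), (∀ j, f j ∈ B) ∧ ∑ j, f j = x := by
      simpa [intervalSum, foldSum, Set.mem_iUnion] using hx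
    rw [Finset.mem_range] at hh
    -- decompose each f j
    have hdecomp : ∀ j, ∃ (i : Fin t) (m : ℕ), m ≤ c i ∧
        f j = fun i' => if i' = i then (m : ZMod (d i')) else 0 := by
      intro j
      have := hfB j
      rw [hB] at this
      rcases this with h0 | hmem
      · refine ⟨⟨0, ht⟩, 0, Nat.zero_le _, ?_⟩
        simp only [Set.mem_singleton_iff] at h0
        funext i'
        simp [h0]
      · rw [Set.mem_iUnion] at hmem
        obtain ⟨i, ⟨⟨m, hm1, hm2, hmi⟩, hz⟩⟩ := hmem
        refine ⟨i, m, hm2, ?_⟩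
        funext i'
        by_cases hi' : i' = i
        · subst hi'; simpa using hmi
        · simpa [hi'] using hz i' hi'
    choose ι μ hμc hf using hdecomp
    -- S i : total nat contribution to coordinate i
    set S : Fin t → ℕ := fun i => ∑ j, if ι j = i then μ j else 0 with hS
    have hScast : ∀ i, ((S i : ZMod (d i))) = -1 := by
      intro i
      have := congrFun hfsum i
      rw [hxdef] at this
      simp only at this
      rw [hS]
      push_cast
      rw [← this, Finset.sum_apply]
      apply Finset.sum_congr rfl
      intro j _
      rw [hf j]
      by_cases hj : ι j = i
      · simp [hj]
      · simp [Ne.symm hj, hj]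
    have hSge : ∀ i, d i - 1 ≤ S i := by
      intro i
      have : (((S i + 1 : ℕ)) : ZMod (d i)) = 0 := by push_cast [hScast i]; ring
      rw [ZMod.natCast_eq_zero_iff] at this
      have := Nat.le_of_dvd (Nat.succ_pos _) this
      omega
    set k : Fin t → ℕ := fun i => (Finset.univ.filter (fun j => ι j = i ∧ μ j ≠ 0)).card
      with hk
    have hSk : ∀ i, S i ≤ c i * k i := by
      intro i
      rw [hS, hk]
      calc ∑ j, (if ι j = i then μ j else 0)
          = ∑ j ∈ Finset.univ.filter (fun j => ι j = i ∧ μ j ≠ 0), μ j := by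
            rw [Finset.sum_filter]
            apply Finset.sum_congr rfl
            intro j _
            by_cases h1 : ι j = i <;> by_cases h2 : μ j = 0 <;> simp [h1, h2]
        _ ≤ ∑ _j ∈ Finset.univ.filter (fun j => ι j = i ∧ μ j ≠ 0), c i := by
            apply Finset.sum_le_sum
            intro j hj
            have := hμc j
            rw [Finset.mem_filter] at hj
            rw [hj.2.1] at this
            exact this
        _ = (Finset.univ.filter (fun j => ι j = i ∧ μ j ≠ 0)).card * c i := by
            simp [Finset.sum_const, mul_comm]
        _ = c i * _ := mul_comm _ _
    have hceil : ∀ i, (d i - 1 + c i - 1) / c i ≤ k i := by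
      intro i
      rw [Nat.div_le_iff_le_mul_add_pred (hc1 i)]
      have := hSge i
      have := hSk i
      have := hc1 i
      omega
    have hktot : ∑ i, k i ≤ h := by
      calc ∑ i, k i = ∑ i, ∑ j, (if ι j = i ∧ μ j ≠ 0 then 1 else 0) := by
            apply Finset.sum_congr rfl
            intro i _
            simp only [hk]
            rw [Finset.card_filter]
        _ = ∑ j : Fin h, ∑ i, (if ι j = i ∧ μ j ≠ 0 then 1 else 0) := Finset.sum_comm
        _ ≤ ∑ _j : Fin h, 1 := by
            apply Finset.sum_le_sum
            intro j _
            by_cases h2 : μ j = 0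
            · simp [h2]
            · rw [Finset.sum_eq_single (ι j)]
              · simp [h2]
              · intro b _ hb
                simp [(Ne.symm hb : ι j ≠ b)]
              · simp
        _ = h := by simp
    have : s + 1 ≤ s := by
      calc s + 1 ≤ ∑ i, (d i - 1 + c i - 1) / c i := hsum
        _ ≤ ∑ i, k i := Finset.sum_le_sum fun i _ => hceil i
        _ ≤ h := hktot
        _ ≤ s := by omega
    omega
end

section
/- Let p be prime and h a positive integer with h ≤ p-1, and let A = {1, 2, ..., ⌊(p-2)/h⌋ + 1} ⊆ Z_p (images of these integers mod p). Then A generates Z_p, |A| = ⌊(p-2)/h⌋ + 1, and the h-fold sumset hA is a proper subset of Z_p; in fact h-1 (mod p) ∉ hA. -/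
theorem prime_case_construction (p : ℕ) (hp : p.Prime) (h : ℕ) (hh : 1 ≤ h)
    (hhp : h ≤ p - 1) (A : Set (ZMod p))
    (hA : A = {x | ∃ m : ℕ, 1 ≤ m ∧ m ≤ (p - 2) / h + 1 ∧ x = (m : ZMod p)}) :
    AddSubgroup.closure A = ⊤ ∧ A.ncard = (p - 2) / h + 1 ∧
    foldSum h A ≠ Set.univ ∧ ((h - 1 : ℕ) : ZMod p) ∉ foldSum h A := by
  haveI : NeZero p := ⟨hp.pos.ne'⟩
  have hp2 : 2 ≤ p := hp.two_le
  set k : ℕ := (p - 2) / h + 1 with hk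
  have hkp : k ≤ p - 1 := by
    have h1 : (p - 2) / h ≤ p - 2 := Nat.div_le_self _ _
    omega
  have h1A : (1 : ZMod p) ∈ A := by
    rw [hA]; exact ⟨1, le_refl 1, Nat.le_add_left 1 _, by norm_num⟩
  -- main arithmetic fact: h - 1 mod p is not a sum
  have key : ((h - 1 : ℕ) : ZMod p) ∉ foldSum h A := by
    rintro ⟨f, hf, hsum⟩
    have hm : ∀ i, ∃ m : ℕ, 1 ≤ m ∧ m ≤ k ∧ f i = (m : ZMod p) := by
      intro i; have := hf i; rw [hA] at this; exact this
    choose m hm1 hm2 hmeq using hm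
    have hS : ((∑ i, m i : ℕ) : ZMod p) = ((h - 1 : ℕ) : ZMod p) := by
      rw [← hsum]; push_cast
      exact Finset.sum_congr rfl fun i _ => (hmeq i).symm
    set S : ℕ := ∑ i, m i with hSdef
    have hSlb : h ≤ S := by
      calc h = ∑ _i : Fin h, 1 := by simp
        _ ≤ S := Finset.sum_le_sum fun i _ => hm1 i
    have hSub : S ≤ h * k := by
      calc S ≤ ∑ _i : Fin h, k := Finset.sum_le_sum fun i _ => hm2 i
        _ = h * k := by simp [mul_comm]
    have hhk : h * k ≤ p - 2 + h := by
      have : h * ((p - 2) / h) ≤ p - 2 := Nat.mul_div_le _ _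
      calc h * k = h * ((p - 2) / h) + h := by rw [hk]; ring
        _ ≤ p - 2 + h := by omega
    have hmod : S ≡ h - 1 [MOD p] := (ZMod.natCast_eq_natCast_iff _ _ _).1 hS
    have hdvd : p ∣ S - (h - 1) := (Nat.modEq_iff_dvd' (by omega)).1 hmod.symm
    have h1 : 0 < S - (h - 1) := by omega
    have := Nat.le_of_dvd h1 hdvd
    omega
  refine ⟨?_, ?_, ?_, key⟩
  · rw [eq_top_iff]
    intro x _
    have : x = x.val • (1 : ZMod p) := by
      rw [nsmul_eq_mul, mul_one, ZMod.natCast_val, ZMod.cast_id]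
    rw [this]
    exact AddSubgroup.nsmul_mem _ (AddSubgroup.subset_closure h1A) _
  · have hAeq : A = ↑((Finset.Icc 1 k).image (fun m : ℕ => (m : ZMod p))) := by
      rw [hA]; ext x
      simp only [Finset.coe_image, Set.mem_image, Finset.mem_coe, Finset.mem_Icc,
        Set.mem_setOf_eq]
      constructor
      · rintro ⟨m, h1, h2, rfl⟩; exact ⟨m, ⟨h1, h2⟩, rfl⟩
      · rintro ⟨m, ⟨h1, h2⟩, rfl⟩; exact ⟨m, h1, h2, rfl⟩
    have hinj : Set.InjOn (fun m : ℕ => (m : ZMod p)) ↑(Finset.Icc 1 k) := by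
      intro a ha b hb hab
      simp only [Finset.coe_Icc, Set.mem_Icc] at ha hb
      have ha' : a < p := by omega
      have hb' : b < p := by omega
      have := congrArg ZMod.val hab
      rwa [ZMod.val_natCast_of_lt ha', ZMod.val_natCast_of_lt hb'] at this
    rw [hAeq, Set.ncard_coe_finset, Finset.card_image_of_injOn hinj, Nat.card_Icc]
    simp
  · intro heq
    exact key (heq ▸ Set.mem_univ _)
end

section
/- Let n be a composite positive integer and h a positive integer. Suppose that for every divisor d of n with d < n, we have (⌊(d-2)/h⌋+1)·(n/d) ≤ ⌊(n-2)/h⌋. Then for every prime divisor p of n, h divides p - 1. -/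
theorem prime_divisors_cong_one (n h : ℕ) (hn : 2 ≤ n) (hcomp : ¬ n.Prime) (hh : 1 ≤ h)
    (hyp : ∀ d : ℕ, d ∣ n → d < n →
      (((d : ℤ) - 2) / h + 1) * ((n : ℤ) / d) ≤ ((n : ℤ) - 2) / h) :
    ∀ p : ℕ, p.Prime → p ∣ n → h ∣ p - 1 := by
  intro p hp hdvd
  have hp2 : 2 ≤ p := hp.two_le
  have hple : p ≤ n := Nat.le_of_dvd (by omega) hdvd
  have hpn : p < n := lt_of_le_of_ne hple (fun e => hcomp (e ▸ hp))
  obtain ⟨m, hm⟩ := hdvd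
  have hm2 : 2 ≤ m := by
    rcases Nat.lt_or_ge m 2 with h' | h'
    · interval_cases m <;> omega
    · exact h'
  have key := hyp p ⟨m, hm⟩ hpn
  have hpz0 : ((p : ℤ)) ≠ 0 := by positivity
  have hdivnp : (n : ℤ) / (p : ℤ) = m := by
    have : (n : ℤ) = (p : ℤ) * m := by exact_mod_cast hm
    rw [this, Int.mul_ediv_cancel_left _ hpz0]
  rw [hdivnp] at key
  set q : ℤ := ((p : ℤ) - 2) / h with hq
  set r : ℤ := ((p : ℤ) - 2) % h with hrdef
  have hhz : (0 : ℤ) < (h : ℤ) := by exact_mod_cast hh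
  have hqr : (p : ℤ) - 2 = (h : ℤ) * q + r := (Int.mul_ediv_add_emod _ _).symm
  have hr0 : 0 ≤ r := Int.emod_nonneg _ (by positivity)
  have hrh : r < (h : ℤ) := Int.emod_lt_of_pos _ hhz
  have hpz : (p : ℤ) = (h : ℤ) * q + r + 2 := by linarith
  have hn2 : (n : ℤ) - 2 = ((r + 2) * m - 2) + (q * m) * h := by
    have hnz : (n : ℤ) = (p : ℤ) * m := by exact_mod_cast hm
    rw [hnz, hpz]; ring
  have hsplit : ((n : ℤ) - 2) / h = ((r + 2) * m - 2) / h + q * m := by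
    rw [hn2, Int.add_mul_ediv_right _ _ (by positivity)]
  rw [hsplit] at key
  have e : ((q : ℤ) + 1) * m = q * m + m := by ring
  rw [e] at key
  have key2 : (m : ℤ) ≤ ((r + 2) * m - 2) / h := by linarith
  have key3 : (m : ℤ) * h ≤ (r + 2) * m - 2 := (Int.le_ediv_iff_mul_le hhz).mp key2
  have hmz : (2 : ℤ) ≤ (m : ℤ) := by exact_mod_cast hm2
  have hrm : r = (h : ℤ) - 1 := by
    by_contra hne
    have hrle : r + 2 ≤ (h : ℤ) := by omega
    nlinarith [mul_le_mul_of_nonneg_right hrle (show (0:ℤ) ≤ (m:ℤ) by positivity), key3]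
  have hfin : (h : ℤ) ∣ ((p : ℤ) - 1) := ⟨q + 1, by rw [hpz, hrm]; ring⟩
  exact Int.natCast_dvd_natCast.mp (by rw [Nat.cast_sub hp.one_le]; exact_mod_cast hfin)
end

section
/- Let p be a prime, h ≥ 1, n a positive integer divisible by p with p < n. Write p - 2 = ch + r with 0 ≤ r ≤ h-1. If r ≤ h - 2, then (⌊(p-2)/h⌋ + 1)·(n/p) > ⌊(n-2)/h⌋. -/
theorem fd_large_of_small_remainder (p : ℕ) (hp : p.Prime) (h : ℕ) (hh : 1 ≤ h)
    (n : ℕ) (hpn : p ∣ n) (hlt : p < n) (c r : ℕ)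
    (hdecomp : p - 2 = c * h + r) (hr : r < h) (hr2 : r + 2 ≤ h) :
    (n - 2) / h < ((p - 2) / h + 1) * (n / p) := by
  have hp2 : 2 ≤ p := hp.two_le
  have hh0 : 0 < h := hh
  have hc : (p - 2) / h = c := by
    rw [hdecomp, mul_comm, Nat.mul_add_div hh0, Nat.div_eq_of_lt hr, add_zero]
  rw [hc, Nat.div_lt_iff_lt_mul hh0]
  have hm : 1 ≤ n / p := (Nat.one_le_div_iff (by omega)).mpr hlt.le
  have hn : p * (n / p) = n := Nat.mul_div_cancel' hpn
  have hkey : p ≤ (c + 1) * h := by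
    obtain ⟨x, hx⟩ : ∃ x, c * h = x := ⟨_, rfl⟩
    have h1 : p - 2 = x + r := by rw [hdecomp, hx]
    have h2 : (c + 1) * h = x + h := by rw [add_mul, one_mul, hx]
    omega
  calc n - 2 < n := by omega
    _ = p * (n / p) := hn.symm
    _ ≤ ((c + 1) * h) * (n / p) := Nat.mul_le_mul_right _ hkey
    _ = (c + 1) * (n / p) * h := by ring
end

section
/- Let G = Z_{n₁} × ... × Z_{n_r} with n₁ ≥ 2, n_i | n_{i+1}, and h a positive integer dividing each n_i - 1. Let A = ∪_{i=1}^r A_i where A_i = Z_{n₁} × ... × Z_{n_{i-1}} × {1,...,(n_i-1)/h} × {0}^{r-i}. Then 0 ∉ hA, i.e., no sum of h elements of A equals the identity of G. -/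
theorem construction_zero_not_mem (r : ℕ) (hr : 0 < r) (n : Fin r → ℕ) (hn2 : ∀ i, 2 ≤ n i)
    (hdvd : ∀ i j : Fin r, i ≤ j → n i ∣ n j)
    (h : ℕ) (hh : 0 < h) (hdiv : ∀ i, h ∣ n i - 1)
    (A : Set (∀ i, ZMod (n i)))
    (hA : A = ⋃ i, {x | (∃ m : ℕ, 1 ≤ m ∧ m ≤ (n i - 1) / h ∧ x i = (m : ZMod (n i))) ∧
        ∀ j, i < j → x j = 0}) :
    (0 : ∀ i, ZMod (n i)) ∉ foldSum h A := by
  rintro ⟨f, hf, hsum⟩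
  have key : ∀ j : Fin h, ∃ i : Fin r,
      (∃ m : ℕ, 1 ≤ m ∧ m ≤ (n i - 1) / h ∧ f j i = (m : ZMod (n i))) ∧
      ∀ j', i < j' → f j j' = 0 := by
    intro j
    have := hf j
    rw [hA] at this
    simpa using this
  choose g hgm hzero using key
  choose m hm1 hm2 hmval using hgm
  haveI : Nonempty (Fin h) := ⟨⟨0, hh⟩⟩
  haveI : Nonempty (Fin r) := ⟨⟨0, hr⟩⟩
  obtain ⟨j0, -, hj0⟩ := Finset.exists_mem_eq_sup' (Finset.univ_nonempty (α := Fin h)) g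
  set k := Finset.univ.sup' Finset.univ_nonempty g with hk
  have hle : ∀ j, g j ≤ k := fun j => Finset.le_sup' g (Finset.mem_univ j)
  haveI : NeZero (n k) := ⟨by have := hn2 k; omega⟩
  set M : Fin h → ℕ := fun j => if g j = k then m j else 0 with hM
  have hfjk : ∀ j, f j k = (M j : ZMod (n k)) := by
    intro j
    by_cases hjk : g j = k
    · simp only [hM, if_pos hjk]
      exact hjk ▸ hmval j
    · have : g j < k := lt_of_le_of_ne (hle j) hjk
      simp only [hM, if_neg hjk]
      simpa using hzero j k this
  have hsumk : ((∑ j, M j : ℕ) : ZMod (n k)) = 0 := by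
    have := congrFun hsum k
    rw [Finset.sum_apply] at this
    simp only [hfjk] at this
    rw [Nat.cast_sum]
    simpa using this
  have hub : ∑ j, M j ≤ n k - 1 := by
    calc ∑ j, M j ≤ ∑ _j : Fin h, (n k - 1) / h := by
          apply Finset.sum_le_sum
          intro j _
          by_cases hjk : g j = k
          · simp only [hM, if_pos hjk]
            exact hjk ▸ hm2 j
          · simp [hM, if_neg hjk]
      _ = h * ((n k - 1) / h) := by simp [Finset.sum_const, mul_comm]
      _ = n k - 1 := Nat.mul_div_cancel' (hdiv k)
  have hlb : 1 ≤ ∑ j, M j := by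
    have : 1 ≤ M j0 := by
      simp only [hM, if_pos hj0.symm]
      exact hm1 j0
    calc 1 ≤ M j0 := this
      _ ≤ ∑ j, M j := Finset.single_le_sum (fun j _ => Nat.zero_le _) (Finset.mem_univ j0)
  rw [ZMod.natCast_eq_zero_iff] at hsumk
  have := Nat.le_of_dvd (by omega) hsumk
  have := hn2 k
  omega
end

section
/- Let r and s be positive integers with s ≥ 2 and r ≥ s+1. Then there exists a generating subset A of the elementary abelian 2-group Z₂^r with |A| = (s+2)·2^{r-s-1} and [0,s]A ≠ Z₂^r; hence χ̂(Z₂^r,[0,s]) ≥ (s+2)·2^{r-s-1} + 1. -/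
/-- weight on first `t` coordinates -/
def wtt (t : ℕ) {r : ℕ} (x : Fin r → ZMod 2) : ℕ :=
  (Finset.univ.filter fun i : Fin r => i.val < t ∧ x i ≠ 0).card

lemma wtt_zero (t r : ℕ) : wtt t (0 : Fin r → ZMod 2) = 0 := by
  simp [wtt]

lemma wtt_add_le (t : ℕ) {r : ℕ} (x y : Fin r → ZMod 2) :
    wtt t (x + y) ≤ wtt t x + wtt t y := by
  refine le_trans (Finset.card_le_card ?_) (Finset.card_union_le _ _)
  intro i hi
  simp only [Finset.mem_filter, Finset.mem_union, Finset.mem_univ, true_and] at hi ⊢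
  obtain ⟨h1, h2⟩ := hi
  by_cases hx : x i = 0
  · right; refine ⟨h1, fun hy => h2 ?_⟩; simp [Pi.add_apply, hx, hy]
  · left; exact ⟨h1, hx⟩

lemma wtt_sum_le (t : ℕ) {r : ℕ} {ι : Type*} (s : Finset ι) (f : ι → Fin r → ZMod 2) :
    wtt t (∑ i ∈ s, f i) ≤ ∑ i ∈ s, wtt t (f i) := by
  classical
  induction s using Finset.cons_induction with
  | empty => simp [wtt_zero]
  | cons a s ha ih =>
      rw [Finset.sum_cons, Finset.sum_cons]
      exact (wtt_add_le _ _ _).trans (by gcongr)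

lemma wtt_single_le (t : ℕ) {r : ℕ} (i : Fin r) (c : ZMod 2) :
    wtt t (Pi.single i c) ≤ 1 := by
  refine le_trans (Finset.card_le_card (s := _) (t := {i}) ?_) (by simp)
  intro j hj
  simp only [Finset.mem_filter, Finset.mem_univ, true_and, Finset.mem_singleton] at hj ⊢
  by_contra hne
  exact hj.2 (by simp [Pi.single_eq_of_ne hne])

lemma filter_lt_eq_map {t r : ℕ} (ht : t ≤ r) (p : Fin r → Prop) [DecidablePred p]
    (hp : ∀ i, i.val < t → p i) (hp2 : ∀ i, p i → i.val < t) :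
    (Finset.univ.filter p) = Finset.map (Fin.castLEEmb ht) Finset.univ := by
  ext i
  simp only [Finset.mem_filter, Finset.mem_univ, true_and, Finset.mem_map]
  constructor
  · intro h1
    exact ⟨⟨i.val, hp2 i h1⟩, Fin.ext rfl⟩
  · rintro ⟨j, rfl⟩
    exact hp _ (by simpa using j.isLt)

lemma wtt_allones (t r : ℕ) (ht : t ≤ r) : wtt t (fun _ : Fin r => (1 : ZMod 2)) = t := by
  rw [wtt, filter_lt_eq_map ht _ (fun i hi => ⟨hi, by decide⟩) (fun i hi => hi.1)]
  simp

def splitEq {t r : ℕ} (ht : t ≤ r) :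
    (Fin r → ZMod 2) ≃ (Fin t → ZMod 2) × (Fin (r - t) → ZMod 2) where
  toFun x := (fun j => x (Fin.castLE ht j), fun j => x ⟨t + j.val, by omega⟩)
  invFun p := fun i => if h : i.val < t then p.1 ⟨i.val, h⟩
    else p.2 ⟨i.val - t, by omega⟩
  left_inv x := by
    funext i
    by_cases h : i.val < t
    · simp only [dif_pos h]
      congr 1
    · simp only [dif_neg h]
      congr 1
      exact Fin.ext (by simp; omega)
  right_inv p := by
    ext j
    · simp only []
      rw [dif_pos (by simpa using j.isLt)]
      congr 1
    · simp only []
      rw [dif_neg (by omega)]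
      congr 1
      exact Fin.ext (by simp)

lemma wtt_eq_card {t r : ℕ} (ht : t ≤ r) (x : Fin r → ZMod 2) :
    wtt t x = (Finset.univ.filter fun j : Fin t => x (Fin.castLE ht j) ≠ 0).card := by
  rw [wtt, ← Finset.card_map (Fin.castLEEmb ht)]
  congr 1
  ext i
  simp only [Finset.mem_filter, Finset.mem_univ, true_and, Finset.mem_map,
    Fin.castLEEmb_apply]
  constructor
  · rintro ⟨h1, h2⟩
    exact ⟨⟨i.val, h1⟩, h2, Fin.ext rfl⟩
  · rintro ⟨j, hj, rfl⟩
    exact ⟨by simp, hj⟩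

/-- The small set `B = {0, e₁, …, e_t}` as a Finset. -/
def Bfin (t : ℕ) : Finset (Fin t → ZMod 2) :=
  insert 0 (Finset.univ.image fun j : Fin t => Pi.single j (1 : ZMod 2))

lemma Bfin_card (t : ℕ) : (Bfin t).card = t + 1 := by
  rw [Bfin, Finset.card_insert_of_notMem, Finset.card_image_of_injective _ ?inj]
  · simp
  case inj =>
    intro a b hab
    by_contra hne
    have := congrFun hab a
    simp only [Pi.single_eq_same, Pi.single_eq_of_ne hne] at this
    exact one_ne_zero this
  · simp only [Finset.mem_image, Finset.mem_univ, true_and, not_exists]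
    intro j hj
    have := congrFun hj j
    rw [Pi.single_eq_same] at this
    exact one_ne_zero this

lemma mem_Bfin_iff (t : ℕ) (y : Fin t → ZMod 2) :
    y ∈ Bfin t ↔ (Finset.univ.filter fun j => y j ≠ 0).card ≤ 1 := by
  constructor
  · intro hy
    simp only [Bfin, Finset.mem_insert, Finset.mem_image, Finset.mem_univ, true_and] at hy
    rcases hy with rfl | ⟨j, rfl⟩
    · simp
    · refine le_trans (Finset.card_le_card (t := {j}) ?_) (by simp)
      intro k hk
      simp only [Finset.mem_filter, Finset.mem_univ, true_and, Finset.mem_singleton] at hk ⊢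
      by_contra hne
      exact hk (by simp [Pi.single_eq_of_ne hne])
  · intro hy
    simp only [Bfin, Finset.mem_insert, Finset.mem_image, Finset.mem_univ, true_and]
    by_cases h0 : y = 0
    · exact Or.inl h0
    · right
      obtain ⟨j, hj⟩ : ∃ j, y j ≠ 0 := by
        by_contra h
        push_neg at h
        exact h0 (funext h)
      refine ⟨j, funext fun k => ?_⟩
      by_cases hkj : k = j
      · subst hkj
        rw [Pi.single_eq_same]
        have : ∀ c : ZMod 2, c ≠ 0 → c = 1 := by decide
        exact (this _ hj).symm
      · rw [Pi.single_eq_of_ne hkj]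
        by_contra hk
        have h2 : 1 < (Finset.univ.filter fun j => y j ≠ 0).card := by
          refine Finset.one_lt_card.mpr ⟨k, ?_, j, ?_, hkj⟩ <;>
            simp only [Finset.mem_filter, Finset.mem_univ, true_and]
          · exact fun h => hk h.symm
          · exact hj
        omega

lemma ncard_wtt_le_one {t r : ℕ} (ht : t ≤ r) :
    Set.ncard {x : Fin r → ZMod 2 | wtt t x ≤ 1} = (t + 1) * 2 ^ (r - t) := by
  have hA : {x : Fin r → ZMod 2 | wtt t x ≤ 1}
      = ⇑(splitEq ht) ⁻¹' ((↑(Bfin t) : Set (Fin t → ZMod 2)) ×ˢ Set.univ) := by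
    ext x
    simp only [Set.mem_setOf_eq, Set.mem_preimage, Set.mem_prod, Set.mem_univ, and_true,
      Finset.mem_coe]
    rw [mem_Bfin_iff, wtt_eq_card ht]
    rfl
  have himg : ⇑(splitEq ht) ⁻¹' ((↑(Bfin t) : Set (Fin t → ZMod 2)) ×ˢ Set.univ)
      = ⇑(splitEq ht).symm '' ((↑(Bfin t) : Set (Fin t → ZMod 2)) ×ˢ Set.univ) := by
    rw [Equiv.image_eq_preimage_symm]
    simp
  rw [hA, himg, Set.ncard_image_of_injective _ (Equiv.injective _)]
  calc Set.ncard ((↑(Bfin t) : Set (Fin t → ZMod 2)) ×ˢ (Set.univ : Set (Fin (r - t) → ZMod 2)))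
      = Nat.card ↥((↑(Bfin t) : Set (Fin t → ZMod 2)) ×ˢ (Set.univ : Set (Fin (r - t) → ZMod 2))) :=
        (Nat.card_coe_set_eq _).symm
    _ = Nat.card (↥(↑(Bfin t) : Set (Fin t → ZMod 2)) × ↥(Set.univ : Set (Fin (r - t) → ZMod 2))) :=
        Nat.card_congr (Equiv.Set.prod _ _)
    _ = Nat.card ↥(↑(Bfin t) : Set (Fin t → ZMod 2)) *
          Nat.card ↥(Set.univ : Set (Fin (r - t) → ZMod 2)) := Nat.card_prod _ _
    _ = (t + 1) * 2 ^ (r - t) := by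
        rw [Nat.card_coe_set_eq, Nat.card_coe_set_eq, Set.ncard_coe_finset, Bfin_card,
          Set.ncard_univ]
        congr 1
        simp [Nat.card_eq_fintype_card]

lemma closure_wtt_le_one (t r : ℕ) :
    AddSubgroup.closure {x : Fin r → ZMod 2 | wtt t x ≤ 1} = ⊤ := by
  rw [eq_top_iff]
  intro x _
  have hx : x = ∑ i, Pi.single i (x i) := (Finset.univ_sum_single x).symm
  rw [hx]
  refine AddSubgroup.sum_mem _ fun i _ => ?_
  exact AddSubgroup.subset_closure (Set.mem_setOf_eq ▸ wtt_single_le t i (x i))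

theorem chiHat_interval_lower_elementary_two (r s : ℕ) (hs : 2 ≤ s) (hr : s + 1 ≤ r) :
    (∃ A : Set (Fin r → ZMod 2), AddSubgroup.closure A = ⊤ ∧
        A.ncard = (s + 2) * 2 ^ (r - s - 1) ∧ intervalSum s A ≠ Set.univ) ∧
    (s + 2) * 2 ^ (r - s - 1) + 1 ≤
      sInf {m : ℕ | ∀ A : Set (Fin r → ZMod 2), AddSubgroup.closure A = ⊤ →
        m ≤ A.ncard → intervalSum s A = Set.univ} := by
  have ht : s + 1 ≤ r := hr
  set A : Set (Fin r → ZMod 2) := {x | wtt (s + 1) x ≤ 1} with hAdef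
  have hclos : AddSubgroup.closure A = ⊤ := closure_wtt_le_one (s + 1) r
  have hcard : A.ncard = (s + 2) * 2 ^ (r - s - 1) := by
    have h2 : r - (s + 1) = r - s - 1 := by omega
    rw [hAdef, ncard_wtt_le_one ht, h2]
  have hne : intervalSum s A ≠ Set.univ := by
    intro heq
    have h1 : (fun _ : Fin r => (1 : ZMod 2)) ∈ intervalSum s A := heq ▸ Set.mem_univ _
    rw [intervalSum] at h1
    simp only [Set.mem_iUnion, Finset.mem_range] at h1
    obtain ⟨h, hh, f, hfA, hsum⟩ := h1
    have hw : wtt (s + 1) (fun _ : Fin r => (1 : ZMod 2)) ≤ h := by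
      rw [← hsum]
      refine (wtt_sum_le _ _ _).trans ?_
      calc ∑ i, wtt (s + 1) (f i) ≤ ∑ _i : Fin h, 1 := Finset.sum_le_sum fun i _ => hfA i
        _ = h := by simp
    rw [wtt_allones _ _ ht] at hw
    omega
  refine ⟨⟨A, hclos, hcard, hne⟩, ?_⟩
  have hSne : {m : ℕ | ∀ A : Set (Fin r → ZMod 2), AddSubgroup.closure A = ⊤ →
      m ≤ A.ncard → intervalSum s A = Set.univ}.Nonempty := by
    refine ⟨2 ^ r + 1, fun B _ hle => absurd hle ?_⟩
    have hB : B.ncard ≤ 2 ^ r := by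
      have := Set.ncard_le_ncard (Set.subset_univ B) Set.finite_univ
      rwa [Set.ncard_univ, Nat.card_eq_fintype_card, Fintype.card_fun, Fintype.card_fin,
        ZMod.card] at this
    omega
  refine le_csInf hSne fun b hb => ?_
  by_contra hlt
  push_neg at hlt
  have hble : b ≤ A.ncard := by omega
  exact hne (hb A hclos hble)
end

section
/- Let n and s be positive integers with n ≥ s+2, and let d be a divisor of n with d ≥ s+2. Then there exists a generating subset A of the cyclic group Z_n with |A| = (⌊(d-2)/s⌋+1)·(n/d) and [0,s]A ≠ Z_n; hence χ̂(Z_n,[0,s]) ≥ f_d(n,s) + 1 where f_d(n,s) = (⌊(d-2)/s⌋+1)·(n/d). -/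
lemma auxDiv (q r m : ℕ) (hr : r < m) : (q * m + r) / m = q := by
  have h : q * m + r = r + m * q := by ring
  rw [h, Nat.add_mul_div_left _ _ (by omega : 0 < m), Nat.div_eq_of_lt hr, Nat.zero_add]

lemma auxMod (q r m : ℕ) (hr : r < m) : (q * m + r) % m = r := by
  have h : q * m + r = r + m * q := by ring
  rw [h, Nat.add_mul_mod_self_left, Nat.mod_eq_of_lt hr]

theorem chiHat_interval_lower_cyclic (n s : ℕ) (hs : 0 < s) (hn : s + 2 ≤ n)
    (d : ℕ) (hd : d ∣ n) (hds : s + 2 ≤ d) :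
    (∃ A : Set (ZMod n), AddSubgroup.closure A = ⊤ ∧
        A.ncard = ((d - 2) / s + 1) * (n / d) ∧ intervalSum s A ≠ Set.univ) ∧
    ((d - 2) / s + 1) * (n / d) + 1 ≤
      sInf {m : ℕ | ∀ A : Set (ZMod n), AddSubgroup.closure A = ⊤ →
        m ≤ A.ncard → intervalSum s A = Set.univ} := by
  have hd0 : 0 < d := by omega
  have hn0 : 0 < n := by omega
  have hdn : d ≤ n := Nat.le_of_dvd hn0 hd
  haveI : NeZero n := ⟨by omega⟩
  haveI : NeZero d := ⟨by omega⟩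
  set k := (d - 2) / s with hk
  have hk1 : 1 ≤ k := (Nat.one_le_div_iff hs).mpr (by omega)
  have hskd : s * k ≤ d - 2 := by rw [hk, mul_comm]; exact Nat.div_mul_le_self _ _
  have hkd : k < d := by
    have : k ≤ s * k := Nat.le_mul_of_pos_left k hs
    omega
  set F : Finset ℕ := (Finset.range n).filter (fun i => i % d ≤ k) with hF
  set A : Set (ZMod n) := (fun i : ℕ => (i : ZMod n)) '' ↑F with hA
  -- cardinality of F
  have hFcard : F.card = (k + 1) * (n / d) := by
    rw [← Finset.card_range ((k + 1) * (n / d))]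
    apply Finset.card_bij' (fun i _ => (i / d) * (k + 1) + i % d)
      (fun j _ => (j / (k + 1)) * d + j % (k + 1))
    · intro i hi
      simp only [hF, Finset.mem_filter, Finset.mem_range] at hi
      obtain ⟨hi1, hi2⟩ := hi
      have hq : i / d < n / d := Nat.div_lt_div_of_lt_of_dvd hd hi1
      have : (i / d) * (k + 1) + i % d < (i / d + 1) * (k + 1) := by
        have := Nat.mod_lt i hd0
        nlinarith
      have h2 : (i / d + 1) * (k + 1) ≤ (n / d) * (k + 1) := Nat.mul_le_mul_right _ hq
      simp only [Finset.mem_range]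
      calc (i / d) * (k + 1) + i % d < (i / d + 1) * (k + 1) := this
        _ ≤ (n / d) * (k + 1) := h2
        _ = (k + 1) * (n / d) := mul_comm _ _
    · intro j hj
      simp only [Finset.mem_range] at hj
      have hjr : j % (k + 1) < k + 1 := Nat.mod_lt _ (by omega)
      have hq : j / (k + 1) < n / d := by
        rw [Nat.div_lt_iff_lt_mul (by omega)]
        calc j < (k + 1) * (n / d) := hj
          _ = (n / d) * (k + 1) := mul_comm _ _
      simp only [hF, Finset.mem_filter, Finset.mem_range]
      constructor
      · have : (j / (k + 1)) * d + j % (k + 1) < (j / (k + 1) + 1) * d := by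
          have : j % (k + 1) < d := by omega
          nlinarith
        calc (j / (k + 1)) * d + j % (k + 1) < (j / (k + 1) + 1) * d := this
          _ ≤ (n / d) * d := Nat.mul_le_mul_right _ hq
          _ = n := Nat.div_mul_cancel hd
      · rw [auxMod _ _ _ (show j % (k + 1) < d by omega)]
        omega
    · intro i hi
      simp only [hF, Finset.mem_filter, Finset.mem_range] at hi
      rw [auxDiv _ _ _ (show i % d < k + 1 by omega),
        auxMod _ _ _ (show i % d < k + 1 by omega), Nat.div_add_mod']
    · intro j hj
      simp only [Finset.mem_range] at hj
      have hjr : j % (k + 1) < k + 1 := Nat.mod_lt _ (by omega)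
      rw [auxDiv _ _ _ (show j % (k + 1) < d by omega),
        auxMod _ _ _ (show j % (k + 1) < d by omega), Nat.div_add_mod']
  have hinj : Set.InjOn (fun i : ℕ => (i : ZMod n)) ↑F := by
    intro a ha b hb hab
    simp only [hF, Finset.coe_filter, Set.mem_setOf_eq, Finset.mem_range] at ha hb
    have h1 := ZMod.val_cast_of_lt (n := n) ha.1
    have h2 := ZMod.val_cast_of_lt (n := n) hb.1
    simp only at hab
    rw [← h1, ← h2, hab]
  have hAcard : A.ncard = (k + 1) * (n / d) := by
    rw [hA, Set.ncard_image_of_injOn hinj, Set.ncard_coe_finset, hFcard]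
  have h1A : (1 : ZMod n) ∈ A := by
    refine ⟨1, ?_, by simp⟩
    simp only [hF, Finset.coe_filter, Set.mem_setOf_eq, Finset.mem_range]
    exact ⟨by omega, by rw [Nat.mod_eq_of_lt (by omega)]; omega⟩
  have hgen : AddSubgroup.closure A = ⊤ := by
    rw [eq_top_iff]
    intro x _
    have hx : x = x.val • (1 : ZMod n) := by
      rw [nsmul_eq_mul, mul_one, ZMod.natCast_val, ZMod.cast_id]
    rw [hx]
    exact AddSubgroup.nsmul_mem _ (AddSubgroup.subset_closure h1A) _
  -- the uncovered element
  have hne : intervalSum s A ≠ Set.univ := by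
    intro hcon
    set π : ZMod n →+* ZMod d := ZMod.castHom hd (ZMod d) with hπ
    have hx : ((d - 1 : ℕ) : ZMod n) ∈ intervalSum s A := hcon ▸ Set.mem_univ _
    simp only [intervalSum, Set.mem_iUnion, foldSum, Set.mem_setOf_eq,
      Finset.mem_range] at hx
    obtain ⟨h, hh, f, hfA, hfsum⟩ := hx
    have key : ∀ i : Fin h, ∃ c : ℕ, c ≤ k ∧ π (f i) = (c : ZMod d) := by
      intro i
      obtain ⟨a, haF, hax⟩ := hfA i
      simp only [hF, Finset.coe_filter, Set.mem_setOf_eq, Finset.mem_range] at haF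
      refine ⟨a % d, haF.2, ?_⟩
      simp only at hax
      rw [← hax, map_natCast, ZMod.natCast_mod]
    choose c hc hπc using key
    have hsum : π ((d - 1 : ℕ) : ZMod n) = ((∑ i, c i : ℕ) : ZMod d) := by
      rw [← hfsum, map_sum, Nat.cast_sum]
      exact Finset.sum_congr rfl fun i _ => hπc i
    have hcb : ∑ i, c i ≤ h * k := by
      calc ∑ i, c i ≤ ∑ _i : Fin h, k := Finset.sum_le_sum fun i _ => hc i
        _ = h * k := by simp [Finset.sum_const, mul_comm]
    have hcd : ∑ i, c i < d := by
      have : h * k ≤ s * k := Nat.mul_le_mul_right _ (by omega)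
      omega
    have hv1 : (((d - 1 : ℕ) : ZMod d)).val = d - 1 := ZMod.val_cast_of_lt (by omega)
    have hv2 : (((∑ i, c i : ℕ) : ZMod d)).val = ∑ i, c i := ZMod.val_cast_of_lt hcd
    rw [map_natCast] at hsum
    have : d - 1 = ∑ i, c i := by rw [← hv1, hsum, hv2]
    have hhs : h * k ≤ s * k := Nat.mul_le_mul_right _ (by omega)
    omega
  refine ⟨⟨A, hgen, hAcard, hne⟩, ?_⟩
  apply le_csInf
  · refine ⟨n + 1, fun B _ hB => absurd hB ?_⟩
    have hBn : B.ncard ≤ n := by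
      have := Set.ncard_le_ncard (Set.subset_univ B) Set.finite_univ
      rwa [Set.ncard_univ, Nat.card_zmod] at this
    omega
  · intro m hm
    by_contra hcon
    have hmle : m ≤ (k + 1) * (n / d) := by omega
    exact hne (hm A hgen (hAcard ▸ hmle))
end
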